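/- Let T = (V,R) be a deterministic linear transition system on a finite-dimensional ℚ-vector space V, and let (Q,q) = α_{E_ℚ(T)}(T). Then for every deterministic linear transition system U with rational spectrum on a finite-dimensional ℚ-vector space and every linear simulation s : T → U, there exists a unique linear simulation s̄ : Q → U such that s̄ ∘ q = s. -/

import Mathlib

open Module

section Defs

variable {V W : Type} [AddCommGroup V] [Module ℚ V] [AddCommGroup W] [Module ℚ W]

/-- A transition system is *deterministic* if each state has at most one successor. -/
def Deterministic (R : Set (V × V)) : Prop :=
  ∀ x y₁ y₂ : V, (x, y₁) ∈ R → (x, y₂) ∈ R → y₁ = y₂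

/-- A transition system is *linear* if its relation is (the carrier of) a ℚ-linear
subspace of `V × V`. -/
def IsLinearRel (R : Set (V × V)) : Prop :=
  ∃ p : Submodule ℚ (V × V), (p : Set (V × V)) = R

/-- A transition system is *affine* if its relation is an affine subspace of `V × V`. -/
def IsAffineRel (R : Set (V × V)) : Prop :=
  ∃ A : AffineSubspace ℚ (V × V), (A : Set (V × V)) = R

/-- A ℚ-linear map `s` is a *linear simulation* from `(V, R)` to `(W, S)`. -/
def Sim (R : Set (V × V)) (S : Set (W × W)) (s : V →ₗ[ℚ] W) : Prop :=
  ∀ x x' : V, (x, x') ∈ R → (s x, s x') ∈ S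

/-- `dom^ω(T)`: the set of states from which an infinite trajectory exists. -/
def OmegaDom (R : Set (V × V)) : Set V :=
  {x | ∃ u : ℕ → V, u 0 = x ∧ ∀ k : ℕ, (u k, u (k + 1)) ∈ R}

/-- `dom(T^k)`: the set of states from which a trajectory of length `k` exists. -/
def DomK (R : Set (V × V)) (k : ℕ) : Set V :=
  {x | ∃ u : ℕ → V, u 0 = x ∧ ∀ i : ℕ, i < k → (u i, u (i + 1)) ∈ R}

/-- A (deterministic linear) transition system has *rational spectrum* if the induced
linear map `T|_ω` on its ω-domain has characteristic polynomial splitting over ℚ. -/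
def HasRationalSpectrum [FiniteDimensional ℚ V] (R : Set (V × V)) : Prop :=
  ∃ (p : Submodule ℚ V) (f : Module.End ℚ p),
    (p : Set V) = OmegaDom R ∧ (∀ x : p, ((x : V), (f x : V)) ∈ R) ∧
    (LinearMap.charpoly f).Splits

/-- The homogenization of an affine relation `R` with respect to a chosen
transition `(x₀, x₀')`. -/
def Homog (R : Set (V × V)) (x₀ x₀' : V) : Set ((V × ℚ) × (V × ℚ)) :=
  {p | p.1.2 = p.2.2 ∧ (p.1.1 + (1 - p.1.2) • x₀, p.2.1 + (1 - p.1.2) • x₀') ∈ R}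

/-- A deterministic affine transition system is a ℚ-DATS if its relation is empty or
its homogenization is a deterministic linear transition system with rational spectrum. -/
def IsQDATS [FiniteDimensional ℚ V] (R : Set (V × V)) : Prop :=
  IsAffineRel R ∧ Deterministic R ∧
    (R = ∅ ∨ ∃ t ∈ R, IsLinearRel (Homog R t.1 t.2) ∧ Deterministic (Homog R t.1 t.2) ∧
      HasRationalSpectrum (Homog R t.1 t.2))

/-- The map `s : V → Λ*` sending `x` to the evaluation functional `f ↦ f x`
(the simulation component of `α_Λ`). -/
def evalIn (Λ : Submodule ℚ (Module.Dual ℚ V)) : V →ₗ[ℚ] Module.Dual ℚ Λ :=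
  Λ.subtype.dualMap ∘ₗ Module.Dual.eval ℚ V

/-- The relation component of `α_Λ`: the image of `R` under the simulation. -/
def ImageRel (R : Set (V × V)) (Λ : Submodule ℚ (Module.Dual ℚ V)) :
    Set (Module.Dual ℚ Λ × Module.Dual ℚ Λ) :=
  (fun p : V × V => (evalIn Λ p.1, evalIn Λ p.2)) '' R

/-- `T` is `(Λ, Λ')`-deterministic. -/
def PairDet (R : Set (V × V)) (Λ Λ' : Submodule ℚ (Module.Dual ℚ V)) : Prop :=
  ∀ x₁ x₂ x₁' x₂' : V, (∀ f ∈ Λ, f x₁ = f x₂) → (x₁, x₁') ∈ R → (x₂, x₂') ∈ R →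
    ∀ g ∈ Λ', g x₁' = g x₂'

/-- `Det(T, Λ)`: the functionals `f` such that `T` is `(Λ, span{f})`-deterministic. -/
def DetSet (R : Set (V × V)) (Λ : Submodule ℚ (Module.Dual ℚ V)) :
    Set (Module.Dual ℚ V) :=
  {f | PairDet R Λ (Submodule.span ℚ {f})}

/-- The generating set of the generalized rational eigenspace `E_ℚ(T)`, where
`f : p → p` is the induced map `T|_ω` on the ω-domain `p`. -/
def GenRatEigenSet (p : Submodule ℚ V) (f : Module.End ℚ p) : Set (Module.Dual ℚ V) :=
  {g | ∃ (l : ℚ) (r : ℕ), 1 ≤ r ∧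
    ∀ x : p, g (((f - l • (1 : Module.End ℚ p)) ^ r) x : V) = 0}

end Defs

/-- A bundled finite-dimensional ℚ-vector space. -/
structure QVec where
  carrier : Type
  [grp : AddCommGroup carrier]
  [mod : Module ℚ carrier]
  [fin : FiniteDimensional ℚ carrier]

attribute [instance] QVec.grp QVec.mod QVec.fin

/-!
If every functional of `E_ℚ(T)` kills `x`, then `x` lies in the ω-domain and, for every rational
`λ`, in the range of `(T|_ω - λ)^n` with `n` large. On that range `T|_ω - λ` is injective, so
rational roots can be peeled off the characteristic polynomial of `T|_ω` one at a time, leaving a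
polynomial `d` without rational roots such that `d(T|_ω) x = 0`. A simulation `s` into `U`
intertwines `T|_ω` and `U|_ω`, hence `d(U|_ω) (s x) = 0`; as `d` is coprime to the split
characteristic polynomial of `U|_ω`, `d(U|_ω)` is injective and `s x = 0`. So `s` vanishes on the
kernel of the surjection `q`, through which it therefore factors uniquely.
-/

open Polynomial LinearMap

theorem Polynomial.isCoprime_of_splits_of_forall_not_isRoot {K : Type*} [Field K]
    {d c : K[X]} (hc : c.Splits) (hc0 : c ≠ 0) (hd : ∀ a, ¬ d.IsRoot a) : IsCoprime d c := by
  refine isCoprime_of_irreducible_dvd (fun h => hd 0 (by simp [h.1])) fun z hz hzd hzc => ?_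
  obtain ⟨a, ha⟩ := (hc.of_dvd hc0 hzc).exists_eval_eq_zero (degree_pos_of_irreducible hz).ne'
  exact hd a (dvd_iff_isRoot.mp ((dvd_iff_isRoot.mpr ha).trans hzd))

theorem LinearMap.existsUnique_comp_eq_of_ker_le {R V Q W : Type*} [Ring R] [AddCommGroup V]
    [Module R V] [AddCommGroup Q] [Module R Q] [AddCommGroup W] [Module R W]
    {q : V →ₗ[R] Q} (hq : Function.Surjective q) {s : V →ₗ[R] W} (h : ker q ≤ ker s) :
    ∃! t : Q →ₗ[R] W, t ∘ₗ q = s := by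
  have hfac :
      ((ker q).liftQ s h ∘ₗ (q.quotKerEquivOfSurjective hq).symm.toLinearMap) ∘ₗ q = s := by
    ext v
    simp [quotKerEquivOfSurjective_symm_apply]
  exact ⟨_, hfac, fun t ht => (cancel_right hq).mp (ht.trans hfac.symm)⟩

theorem LinearMap.comp_aeval_of_comp_eq {R M N : Type*} [CommRing R] [AddCommGroup M]
    [Module R M] [AddCommGroup N] [Module R N] {f : Module.End R M} {g : Module.End R N}
    {s : M →ₗ[R] N} (h : s ∘ₗ f = g ∘ₗ s) (d : R[X]) : s ∘ₗ aeval f d = aeval g d ∘ₗ s := by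
  induction d using Polynomial.induction_on' with
  | add d e hd he => simp [comp_add, add_comp, hd, he]
  | monomial n a =>
    ext x
    have hpow : (g ^ n) (s x) = s ((f ^ n) x) :=
      LinearMap.congr_fun (Module.End.commute_pow_left_of_commute h.symm n) x
    simp [aeval_monomial, Algebra.algebraMap_eq_smul_one, hpow]

section FiniteDimensional

variable {K M N : Type*} [Field K] [AddCommGroup M] [Module K M] [FiniteDimensional K M]
  [AddCommGroup N] [Module K N] [FiniteDimensional K N]

theorem LinearMap.ker_aeval_eq_bot_of_isCoprime_charpoly (g : Module.End K N) {d : K[X]}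
    (hd : IsCoprime d g.charpoly) : ker (aeval g d) = ⊥ := by
  simpa [aeval_self_charpoly] using disjoint_ker_aeval_of_isCoprime g hd

theorem Module.End.eq_zero_of_mem_range_pow_of_apply_eq_zero (φ : Module.End K M) {n : ℕ}
    (hn : finrank K M ≤ n) {y : M} (hy : y ∈ range (φ ^ n)) (h0 : φ y = 0) : y = 0 := by
  obtain ⟨z, rfl⟩ := hy
  have hz : z ∈ ker (φ ^ (n + 1)) := by
    rwa [mem_ker, pow_succ', Module.End.mul_apply]
  rwa [ker_pow_eq_ker_pow_finrank_of_le (hn.trans n.le_succ),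
    ← ker_pow_eq_ker_pow_finrank_of_le hn] at hz

theorem Module.End.exists_forall_not_isRoot_aeval_apply_eq_zero (f : Module.End K M) {n : ℕ}
    (hn : finrank K M ≤ n) {x : M}
    (hx : ∀ l : K, x ∈ range ((f - algebraMap K (Module.End K M) l) ^ n)) :
    ∃ d : K[X], (∀ l, ¬ d.IsRoot l) ∧ aeval f d x = 0 := by
  suffices ∀ d : K[X], d ≠ 0 → aeval f d x = 0 →
      ∃ d : K[X], (∀ l, ¬ d.IsRoot l) ∧ aeval f d x = 0 from
    this _ f.charpoly_monic.ne_zero (by rw [aeval_self_charpoly, LinearMap.zero_apply])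
  intro d hd0 hdx
  induction hdeg : d.natDegree using Nat.strong_induction_on generalizing d with
  | _ m ih =>
  by_cases hroot : ∃ l, d.IsRoot l
  swap
  · exact ⟨d, not_exists.mp hroot, hdx⟩
  obtain ⟨l, hl⟩ := hroot
  set e := d /ₘ (X - C l)
  have hde : (X - C l) * e = d := mul_divByMonic_eq_iff_isRoot.mpr hl
  have he0 : e ≠ 0 := by
    rintro he
    simp [← hde, he] at hd0
  have hφ : f - algebraMap K (Module.End K M) l = aeval f (X - C l) := by simp
  -- `f - l` is injective on the range of `(f - l) ^ n`, which contains `aeval f e x`.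
  refine ih e.natDegree ?_ e he0 ?_ rfl
  · rw [← hdeg, ← hde, natDegree_mul (X_sub_C_ne_zero l) he0, natDegree_X_sub_C]
    omega
  · apply (f - algebraMap K _ l).eq_zero_of_mem_range_pow_of_apply_eq_zero hn
    · obtain ⟨z, hz⟩ := hx l
      refine ⟨aeval f e z, ?_⟩
      rw [← hz, ← Module.End.mul_apply, ← Module.End.mul_apply, hφ, ← map_pow,
        ((Commute.all ((X - C l) ^ n) e).map (aeval f)).eq]
    · rw [hφ, ← Module.End.mul_apply, ← map_mul, hde, hdx]

theorem LinearMap.apply_eq_zero_of_intertwines_of_splits {f : Module.End K M}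
    {g : Module.End K N} {s : M →ₗ[K] N} (hs : s ∘ₗ f = g ∘ₗ s) (hg : g.charpoly.Splits) {n : ℕ}
    (hn : finrank K M ≤ n) {x : M}
    (hx : ∀ l : K, x ∈ range ((f - algebraMap K (Module.End K M) l) ^ n)) : s x = 0 := by
  obtain ⟨d, hd, hdx⟩ := f.exists_forall_not_isRoot_aeval_apply_eq_zero hn hx
  have hker := g.ker_aeval_eq_bot_of_isCoprime_charpoly
    (isCoprime_of_splits_of_forall_not_isRoot hg g.charpoly_monic.ne_zero hd)
  refine ker_eq_bot'.mp hker _ ?_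
  rw [← comp_apply, ← comp_aeval_of_comp_eq hs, comp_apply, hdx, map_zero]

end FiniteDimensional

section TransitionSystem

variable {V W : Type} [AddCommGroup V] [Module ℚ V] [AddCommGroup W] [Module ℚ W]
  {R : Set (V × V)} {S : Set (W × W)} {s : V →ₗ[ℚ] W}

theorem mem_of_forall_genRatEigenSet_apply_eq_zero {p : Submodule ℚ V} {f : Module.End ℚ p}
    {x : V} (hx : ∀ h ∈ GenRatEigenSet p f, h x = 0) : x ∈ p := by
  rw [← Subspace.dualAnnihilator_dualCoannihilator_eq (W := p), Submodule.mem_dualCoannihilator]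
  refine fun h hh => hx h ⟨0, 1, le_rfl, fun y => ?_⟩
  exact (Submodule.mem_dualAnnihilator _).mp hh _ (Submodule.coe_mem _)

theorem mem_range_pow_of_forall_genRatEigenSet_apply_eq_zero {p : Submodule ℚ V}
    {f : Module.End ℚ p} {y : p} (hy : ∀ h ∈ GenRatEigenSet p f, h y = 0) (l : ℚ) {r : ℕ}
    (hr : 1 ≤ r) : y ∈ range ((f - algebraMap ℚ (Module.End ℚ p) l) ^ r) := by
  rw [← Subspace.dualAnnihilator_dualCoannihilator_eq (W := range _),
    Submodule.mem_dualCoannihilator]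
  intro φ hφ
  obtain ⟨h, rfl⟩ := LinearMap.exists_extend φ
  refine hy h ⟨l, r, hr, fun z => ?_⟩
  rw [← Algebra.algebraMap_eq_smul_one]
  exact (Submodule.mem_dualAnnihilator _).mp hφ _ (mem_range_self _ z)

theorem evalIn_surjective [FiniteDimensional ℚ V] (Λ : Submodule ℚ (Module.Dual ℚ V)) :
    Function.Surjective (evalIn Λ) := by
  rw [evalIn, coe_comp, ← Module.evalEquiv_toLinearMap, LinearEquiv.coe_coe]
  exact (dualMap_surjective_of_injective Λ.injective_subtype).comp
    (Module.evalEquiv ℚ V).surjective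

theorem evalIn_span_eq_zero_iff {G : Set (Module.Dual ℚ V)} {x : V} :
    evalIn (Submodule.span ℚ G) x = 0 ↔ ∀ h ∈ G, h x = 0 := by
  change _ ↔ G ⊆ ker (Module.Dual.eval ℚ V x)
  rw [← Submodule.span_le, LinearMap.ext_iff, Subtype.forall]
  rfl

theorem Sim.mapsTo_omegaDom (hs : Sim R S s) : Set.MapsTo s (OmegaDom R) (OmegaDom S) := by
  rintro _ ⟨u, rfl, hu⟩
  exact ⟨s ∘ u, rfl, fun k => hs _ _ (hu k)⟩

theorem Sim.restrict_comp_eq (hs : Sim R S s) (hSdet : Deterministic S) {p : Submodule ℚ V}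
    {q : Submodule ℚ W} (hpq : ∀ x ∈ p, s x ∈ q) {f : Module.End ℚ p}
    (hf : ∀ x : p, ((x : V), (f x : V)) ∈ R) {g : Module.End ℚ q}
    (hg : ∀ y : q, ((y : W), (g y : W)) ∈ S) :
    s.restrict hpq ∘ₗ f = g ∘ₗ s.restrict hpq := by
  ext x
  exact hSdet _ _ _ (hs _ _ (hf x)) (hg (s.restrict hpq x))

theorem Sim.apply_eq_zero_of_forall_genRatEigenSet_apply_eq_zero [FiniteDimensional ℚ V]
    [FiniteDimensional ℚ W] (hs : Sim R S s) (hSdet : Deterministic S)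
    (hS : HasRationalSpectrum S) {p : Submodule ℚ V} (hp : (p : Set V) = OmegaDom R)
    {f : Module.End ℚ p} (hf : ∀ x : p, ((x : V), (f x : V)) ∈ R) {x : V}
    (hx : ∀ h ∈ GenRatEigenSet p f, h x = 0) : s x = 0 := by
  obtain ⟨q, g, hq, hg, hsplit⟩ := hS
  have hpq : ∀ y ∈ p, s y ∈ q := fun y hy => by
    rw [← SetLike.mem_coe, hq]
    exact hs.mapsTo_omegaDom (hp ▸ hy)
  have hxp := mem_of_forall_genRatEigenSet_apply_eq_zero hx
  have hsx : s.restrict hpq ⟨x, hxp⟩ = 0 :=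
    apply_eq_zero_of_intertwines_of_splits (hs.restrict_comp_eq hSdet hpq hf hg) hsplit
      (Nat.le_succ _) fun l => mem_range_pow_of_forall_genRatEigenSet_apply_eq_zero
        (y := ⟨x, hxp⟩) hx l (Nat.succ_pos _)
  exact congr_arg Subtype.val hsx

theorem Sim.imageRel_of_comp_eq {Λ : Submodule ℚ (Module.Dual ℚ V)}
    {t : Module.Dual ℚ Λ →ₗ[ℚ] W} (hs : Sim R S s) (ht : t ∘ₗ evalIn Λ = s) :
    Sim (ImageRel R Λ) S t := by
  rintro _ _ ⟨⟨x, x'⟩, hxx, ⟨⟩⟩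
  simpa [← ht] using hs x x' hxx

end TransitionSystem

theorem genRatEigenspace_factor_general
    (V : Type) [AddCommGroup V] [Module ℚ V] [FiniteDimensional ℚ V]
    (R : Set (V × V))
    (p : Submodule ℚ V) (hp : (p : Set V) = OmegaDom R)
    (f : Module.End ℚ p) (hf : ∀ x : p, ((x : V), (f x : V)) ∈ R) :
    ∀ (X : QVec) (S : Set (X.carrier × X.carrier)),
      IsLinearRel S → Deterministic S → HasRationalSpectrum S →
      ∀ s : V →ₗ[ℚ] X.carrier, Sim R S s →
        ∃! sbar : Module.Dual ℚ (Submodule.span ℚ (GenRatEigenSet p f)) →ₗ[ℚ] X.carrier,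
          sbar ∘ₗ evalIn (Submodule.span ℚ (GenRatEigenSet p f)) = s ∧
          Sim (ImageRel R (Submodule.span ℚ (GenRatEigenSet p f))) S sbar := by
  intro X S _ hSdet hS s hs
  obtain ⟨t, ht, huniq⟩ := existsUnique_comp_eq_of_ker_le (evalIn_surjective _)
    fun x hx => hs.apply_eq_zero_of_forall_genRatEigenSet_apply_eq_zero hSdet hS hp hf
      (evalIn_span_eq_zero_iff.mp hx)
  exact ⟨t, ⟨ht, hs.imageRel_of_comp_eq ht⟩, fun t' ht' => huniq t' ht'.1⟩

/-- every linear simulation from a deterministic linear transition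
system `T` to a ℚ-DLTS factors uniquely through `α_{E_ℚ(T)}(T)`. -/
theorem genRatEigenspace_factor
    (V : Type) [AddCommGroup V] [Module ℚ V] [FiniteDimensional ℚ V]
    (R : Set (V × V)) (hRlin : IsLinearRel R) (hRdet : Deterministic R)
    (p : Submodule ℚ V) (hp : (p : Set V) = OmegaDom R)
    (f : Module.End ℚ p) (hf : ∀ x : p, ((x : V), (f x : V)) ∈ R) :
    ∀ (X : QVec) (S : Set (X.carrier × X.carrier)),
      IsLinearRel S → Deterministic S → HasRationalSpectrum S →
      ∀ s : V →ₗ[ℚ] X.carrier, Sim R S s →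
        ∃! sbar : Module.Dual ℚ (Submodule.span ℚ (GenRatEigenSet p f)) →ₗ[ℚ] X.carrier,
          sbar ∘ₗ evalIn (Submodule.span ℚ (GenRatEigenSet p f)) = s ∧
          Sim (ImageRel R (Submodule.span ℚ (GenRatEigenSet p f))) S sbar :=
  genRatEigenspace_factor_general V R p hp f hf
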